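/- As λ → 0⁺, log ∏_{n≥1}(1 + e^{-2nλ}) = π²/(24λ) - (1/2) log 2 + O(λ). -/

import Mathlib

/-!
With `a = 2λ` and `f(t) = log (1 + e^{-a t})`, the logarithm of the product is `∑_{n ≥ 1} f(n)`.
Since `f'` is monotone, integrating by parts against the kernel `t - (x + 1/2)` shows that on each
`[x, x + 1]` the trapezoid rule overestimates `∫ f` by between `0` and `(f'(x+1) - f'(x)) / 2`.
Summing, the errors telescope: `∑_{n ≥ 1} f(n)` lies between `∫_0^∞ f - f(0)/2` and that plus
`-f'(0)/2 = a/4`. Finally `f(0) = log 2` and, expanding the logarithm in powers of `e^{-a t}`,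
`∫_0^∞ f = (1/a) ∑_k (-1)^k/(k+1)^2 = π²/(12a)`.
-/

open Real MeasureTheory Set Filter Topology intervalIntegral

section MonotoneDeriv

variable {f f' g : ℝ → ℝ}

lemma integral_sub_midpoint_mul_eq {x : ℝ} (hg : IntervalIntegrable g volume x (x + 1)) :
    ∫ t in x..x + 1, (t - (x + 1 / 2)) * g t =
      ∫ t in x..x + 1, (t - (x + 1 / 2)) * (g t - g (x + 1 / 2)) := by
  have hlin : ∫ t in x..x + 1, (t - (x + 1 / 2)) * g (x + 1 / 2) = 0 := by
    rw [intervalIntegral.integral_mul_const, integral_comp_sub_right (fun t => t), integral_id]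
    ring
  simp_rw [mul_sub]
  rw [integral_sub (hg.continuousOn_mul (by fun_prop))
    (intervalIntegrable_const.continuousOn_mul (by fun_prop)), hlin, sub_zero]

lemma sub_midpoint_mul_sub_mem_Icc (hg : Monotone g) {x t : ℝ} (ht : t ∈ Icc x (x + 1)) :
    (t - (x + 1 / 2)) * (g t - g (x + 1 / 2)) ∈ Icc 0 ((g (x + 1) - g x) / 2) := by
  set m := x + 1 / 2 with hm
  have hnonneg : 0 ≤ (t - m) * (g t - g m) := by
    rcases le_total t m with h | h
    · exact mul_nonneg_of_nonpos_of_nonpos (by linarith) (by linarith [hg h])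
    · exact mul_nonneg (by linarith) (by linarith [hg h])
  refine ⟨hnonneg, ?_⟩
  have hdist : |t - m| ≤ 1 / 2 := abs_le.mpr ⟨by linarith [ht.1, hm], by linarith [ht.2, hm]⟩
  have hosc : |g t - g m| ≤ g (x + 1) - g x := by
    have := hg ht.1; have := hg ht.2
    have := hg (show x ≤ m by rw [hm]; linarith); have := hg (show m ≤ x + 1 by rw [hm]; linarith)
    exact abs_le.mpr ⟨by linarith, by linarith⟩
  calc (t - m) * (g t - g m) = |t - m| * |g t - g m| := by rw [← abs_mul, abs_of_nonneg hnonneg]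
    _ ≤ 1 / 2 * (g (x + 1) - g x) := mul_le_mul hdist hosc (abs_nonneg _) (by norm_num)
    _ = (g (x + 1) - g x) / 2 := by ring

lemma integral_sub_midpoint_mul_mem_Icc (hg : Monotone g) (x : ℝ) :
    ∫ t in x..x + 1, (t - (x + 1 / 2)) * g t ∈ Icc 0 ((g (x + 1) - g x) / 2) := by
  rw [integral_sub_midpoint_mul_eq hg.intervalIntegrable]
  have hle : x ≤ x + 1 := by linarith
  have hint : IntervalIntegrable (fun t => (t - (x + 1 / 2)) * (g t - g (x + 1 / 2)))
      volume x (x + 1) :=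
    (hg.intervalIntegrable.sub intervalIntegrable_const).continuousOn_mul (by fun_prop)
  constructor
  · exact integral_nonneg hle fun t ht => (sub_midpoint_mul_sub_mem_Icc hg ht).1
  · calc _ ≤ ∫ _ in x..x + 1, (g (x + 1) - g x) / 2 :=
          integral_mono_on hle hint intervalIntegrable_const
            fun t ht => (sub_midpoint_mul_sub_mem_Icc hg ht).2
      _ = (g (x + 1) - g x) / 2 := by simp

variable (hf : ∀ t, HasDerivAt f (f' t) t) (hf' : Monotone f')
include hf hf'

lemma integral_eq_trapezoid_sub (x : ℝ) :
    ∫ t in x..x + 1, f t = (f x + f (x + 1)) / 2 - ∫ t in x..x + 1, (t - (x + 1 / 2)) * f' t := by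
  have h := integral_mul_deriv_eq_deriv_mul (u := fun t => t - (x + 1 / 2)) (u' := fun _ => 1)
    (a := x) (b := x + 1) (fun t _ => (hasDerivAt_id t).sub_const _) (fun t _ => hf t)
    intervalIntegrable_const hf'.intervalIntegrable
  simp only [one_mul] at h
  rw [h]
  ring

lemma integral_le_trapezoid (x : ℝ) : ∫ t in x..x + 1, f t ≤ (f x + f (x + 1)) / 2 := by
  rw [integral_eq_trapezoid_sub hf hf']
  linarith [(integral_sub_midpoint_mul_mem_Icc hf' x).1]

lemma trapezoid_sub_le_integral (x : ℝ) :
    (f x + f (x + 1)) / 2 - (f' (x + 1) - f' x) / 2 ≤ ∫ t in x..x + 1, f t := by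
  rw [integral_eq_trapezoid_sub hf hf']
  linarith [(integral_sub_midpoint_mul_mem_Icc hf' x).2]

lemma sum_range_mem_Icc_integral (N : ℕ) :
    ∑ n ∈ Finset.range N, f (n + 1) ∈ Icc ((∫ t in (0 : ℝ)..N, f t) - (f 0 - f N) / 2)
      ((∫ t in (0 : ℝ)..N, f t) - (f 0 - f N) / 2 + (f' N - f' 0) / 2) := by
  induction N with
  | zero => simp
  | succ N ih =>
    have hint (a b : ℝ) : IntervalIntegrable f volume a b :=
      (continuous_iff_continuousAt.2 fun t => (hf t).continuousAt).intervalIntegrable a b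
    have hlow := trapezoid_sub_le_integral hf hf' N
    have hup := integral_le_trapezoid hf hf' N
    rw [Finset.sum_range_succ, Nat.cast_succ,
      ← integral_add_adjacent_intervals (hint 0 N) (hint N (N + 1))]
    exact ⟨by linarith [ih.1], by linarith [ih.2]⟩

lemma hasSum_mem_Icc_of_monotone_deriv {S : ℝ} (hS : HasSum (fun n : ℕ => f (n + 1)) S)
    (hint : IntegrableOn f (Ioi 0)) (hf_lim : Tendsto (fun n : ℕ => f n) atTop (𝓝 0))
    (hf'_lim : Tendsto (fun n : ℕ => f' n) atTop (𝓝 0)) :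
    S ∈ Icc ((∫ t in Ioi 0, f t) - f 0 / 2) ((∫ t in Ioi 0, f t) - f 0 / 2 - f' 0 / 2) := by
  have hI : Tendsto (fun N : ℕ => ∫ t in (0 : ℝ)..N, f t) atTop (𝓝 (∫ t in Ioi 0, f t)) :=
    intervalIntegral_tendsto_integral_Ioi 0 hint tendsto_natCast_atTop_atTop
  have hlow := hI.sub ((tendsto_const_nhds (x := f 0)).sub hf_lim |>.div_const 2)
  have hup := hlow.add ((hf'_lim.sub (tendsto_const_nhds (x := f' 0))).div_const 2)
  simp only [sub_zero, zero_sub] at hlow hup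
  have hsum := sum_range_mem_Icc_integral hf hf'
  refine ⟨le_of_tendsto_of_tendsto' hlow hS.tendsto_sum_nat fun N => (hsum N).1, ?_⟩
  linarith [le_of_tendsto_of_tendsto' hS.tendsto_sum_nat hup fun N => (hsum N).2]

end MonotoneDeriv

lemma hasSum_one_div_succ_sq : HasSum (fun n : ℕ => 1 / ((n : ℝ) + 1) ^ 2) (π ^ 2 / 6) := by
  have h := (hasSum_nat_add_iff (f := fun n : ℕ => 1 / (n : ℝ) ^ 2) (g := π ^ 2 / 6) 1).mpr
    (by simpa using hasSum_zeta_two)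
  exact_mod_cast h

-- `ζ(2)` minus the alternating series is twice its even-denominator part, which is `ζ(2) / 4`.
lemma hasSum_neg_one_pow_div_succ_sq :
    HasSum (fun n : ℕ => (-1) ^ n / ((n : ℝ) + 1) ^ 2) (π ^ 2 / 12) := by
  have hdiff : HasSum (fun n : ℕ => 1 / ((n : ℝ) + 1) ^ 2 - (-1) ^ n / ((n : ℝ) + 1) ^ 2)
      (0 + π ^ 2 / 6 / 2) := by
    refine HasSum.even_add_odd ?_ ?_
    · simp [pow_mul]
    · refine (hasSum_one_div_succ_sq.div_const 2).congr_fun fun n => ?_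
      rw [pow_succ (-1 : ℝ), pow_mul]
      push_cast
      field_simp
      ring
  have h := hasSum_one_div_succ_sq.sub hdiff
  rw [show π ^ 2 / 6 - (0 + π ^ 2 / 6 / 2) = π ^ 2 / 12 by ring] at h
  exact h.congr_fun fun n => by ring

lemma integral_exp_neg_mul_Ioi {c : ℝ} (hc : 0 < c) :
    ∫ u in Ioi (0 : ℝ), exp (-(c * u)) = 1 / c := by
  simpa [neg_mul, neg_div] using integral_exp_mul_Ioi (neg_lt_zero.2 hc) 0

lemma integrableOn_exp_neg_mul_Ioi {c : ℝ} (hc : 0 < c) :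
    IntegrableOn (fun u => exp (-(c * u))) (Ioi 0) := by
  simpa [neg_mul] using integrableOn_exp_mul_Ioi (neg_lt_zero.2 hc) 0

lemma hasSum_log_one_add_exp_neg {u : ℝ} (hu : 0 < u) :
    HasSum (fun n : ℕ => (-1) ^ n / ((n : ℝ) + 1) * exp (-(((n : ℝ) + 1) * u)))
      (log (1 + exp (-u))) := by
  have habs : |-exp (-u)| < 1 := by
    rw [abs_neg, abs_of_pos (exp_pos _)]; exact exp_lt_one_iff.mpr (by linarith)
  have h := (hasSum_pow_div_log_of_abs_lt_one habs).neg
  rw [sub_neg_eq_add, neg_neg] at h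
  refine h.congr_fun fun n => ?_
  rw [neg_pow (rexp (-u)), ← exp_nat_mul]
  push_cast
  ring_nf

lemma integral_log_one_add_exp_neg : ∫ u in Ioi (0 : ℝ), log (1 + exp (-u)) = π ^ 2 / 12 := by
  set F : ℕ → ℝ → ℝ := fun n u => (-1) ^ n / ((n : ℝ) + 1) * exp (-(((n : ℝ) + 1) * u))
  have hpos (n : ℕ) : (0 : ℝ) < n + 1 := n.cast_add_one_pos
  have hint (n : ℕ) : IntegrableOn (F n) (Ioi 0) :=
    (integrableOn_exp_neg_mul_Ioi (hpos n)).const_mul _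
  have hF (n : ℕ) : ∫ u in Ioi (0 : ℝ), F n u = (-1) ^ n / ((n : ℝ) + 1) ^ 2 := by
    rw [MeasureTheory.integral_const_mul, integral_exp_neg_mul_Ioi (hpos n)]
    field_simp
  have hnorm (n : ℕ) : ∫ u in Ioi (0 : ℝ), ‖F n u‖ = 1 / ((n : ℝ) + 1) ^ 2 := by
    simp_rw [F, norm_mul, norm_div, norm_pow, norm_neg, norm_one, one_pow,
      Real.norm_of_nonneg (hpos n).le, Real.norm_of_nonneg (exp_pos _).le]
    rw [MeasureTheory.integral_const_mul, integral_exp_neg_mul_Ioi (hpos n)]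
    field_simp
  have hswap := integral_tsum_of_summable_integral_norm hint
    (by simpa only [hnorm] using hasSum_one_div_succ_sq.summable)
  rw [setIntegral_congr_fun measurableSet_Ioi
      fun u hu => (hasSum_log_one_add_exp_neg hu).tsum_eq.symm,
    ← hswap, tsum_congr hF, hasSum_neg_one_pow_div_succ_sq.tsum_eq]

noncomputable def logOneAddExpNeg (a t : ℝ) : ℝ := log (1 + exp (-(a * t)))

section logOneAddExpNeg

variable {a : ℝ}

lemma logOneAddExpNeg_nonneg (a t : ℝ) : 0 ≤ logOneAddExpNeg a t :=
  log_nonneg (by linarith [exp_pos (-(a * t))])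

lemma logOneAddExpNeg_le_exp (a t : ℝ) : logOneAddExpNeg a t ≤ exp (-(a * t)) := by
  rw [logOneAddExpNeg]
  linarith [log_le_sub_one_of_pos (by positivity : 0 < 1 + exp (-(a * t)))]

lemma hasDerivAt_logOneAddExpNeg (a t : ℝ) :
    HasDerivAt (logOneAddExpNeg a) (-a / (exp (a * t) + 1)) t := by
  have hlin : HasDerivAt (fun t => -(a * t)) (-a) t := by
    simpa using ((hasDerivAt_id t).const_mul a).fun_neg
  refine ((hlin.exp.const_add 1).log (by positivity)).congr_deriv ?_
  rw [exp_neg]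
  field_simp

lemma monotone_neg_div_exp_mul_add_one (ha : 0 ≤ a) : Monotone fun t => -a / (exp (a * t) + 1) :=
  fun s t hst => by
    simp only [neg_div, neg_le_neg_iff]
    exact div_le_div_of_nonneg_left ha (by positivity) (by gcongr)

lemma integrableOn_logOneAddExpNeg (ha : 0 < a) : IntegrableOn (logOneAddExpNeg a) (Ioi 0) := by
  have hcont : Continuous (logOneAddExpNeg a) :=
    continuous_iff_continuousAt.2 fun t => (hasDerivAt_logOneAddExpNeg a t).continuousAt
  refine (integrableOn_exp_neg_mul_Ioi ha).mono' hcont.aestronglyMeasurable ?_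
  filter_upwards with t
  rw [Real.norm_of_nonneg (logOneAddExpNeg_nonneg a t)]
  exact logOneAddExpNeg_le_exp a t

lemma integral_logOneAddExpNeg (ha : 0 < a) :
    ∫ t in Ioi 0, logOneAddExpNeg a t = π ^ 2 / 12 / a := by
  have h := integral_comp_mul_left_Ioi (fun u => log (1 + exp (-u))) 0 ha
  simp only [mul_zero, integral_log_one_add_exp_neg, smul_eq_mul] at h
  rw [show ∫ t in Ioi 0, logOneAddExpNeg a t = ∫ t in Ioi 0, log (1 + exp (-(a * t))) from rfl, h]
  field_simp

lemma exp_neg_mul_natCast (a : ℝ) (n : ℕ) : exp (-(a * n)) = exp (-a) ^ n := by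
  rw [← exp_nat_mul]; ring_nf

lemma tendsto_logOneAddExpNeg_natCast (ha : 0 < a) :
    Tendsto (fun n : ℕ => logOneAddExpNeg a n) atTop (𝓝 0) := by
  refine squeeze_zero (fun n => logOneAddExpNeg_nonneg a n) (fun n => logOneAddExpNeg_le_exp a n) ?_
  simp_rw [exp_neg_mul_natCast]
  exact tendsto_pow_atTop_nhds_zero_of_lt_one (exp_nonneg _) (exp_lt_one_iff.2 (by linarith))

lemma tendsto_neg_div_exp_mul_natCast_add_one (ha : 0 < a) :
    Tendsto (fun n : ℕ => -a / (exp (a * n) + 1)) atTop (𝓝 0) :=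
  tendsto_const_nhds.div_atTop <| tendsto_atTop_add_const_right _ 1 <|
    tendsto_exp_atTop.comp (tendsto_natCast_atTop_atTop.const_mul_atTop ha)

lemma hasSum_logOneAddExpNeg (ha : 0 < a) :
    HasSum (fun n : ℕ => logOneAddExpNeg a (n + 1))
      (log (∏' n : ℕ, (1 + exp (-(a * (n + 1)))))) := by
  have hs : Summable fun n : ℕ => logOneAddExpNeg a (n + 1) := by
    refine Summable.of_nonneg_of_le (fun n => logOneAddExpNeg_nonneg a _) (fun n => ?_)
      (summable_geometric_of_lt_one (exp_nonneg (-a)) (exp_lt_one_iff.2 (by linarith)))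
    rw [← exp_neg_mul_natCast]
    exact (logOneAddExpNeg_le_exp a _).trans (exp_le_exp.2 (by nlinarith))
  have hprod := hs.hasSum.rexp
  rw [(hprod.congr_fun fun n => (exp_log (by positivity)).symm).tprod_eq, log_exp]
  exact hs.hasSum

end logOneAddExpNeg

/-- `log ∏_{n≥1}(1+e^{-2nλ}) = π²/(24λ) - (1/2) log 2 + O(λ)` as `λ → 0⁺`. -/
theorem stmt_10 :
    ∃ C > (0:ℝ), ∃ Λ > (0:ℝ), ∀ lam : ℝ, 0 < lam → lam < Λ →
      |Real.log (∏' n : ℕ, (1 + Real.exp (-(2 * ((n:ℝ) + 1)) * lam)))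
        - (π^2 / (24 * lam) - (1/2) * Real.log 2)| ≤ C * lam := by
  refine ⟨1 / 2, by norm_num, 1, one_pos, fun lam hlam _ => ?_⟩
  have ha : 0 < 2 * lam := by positivity
  obtain ⟨hlow, hup⟩ := hasSum_mem_Icc_of_monotone_deriv (hasDerivAt_logOneAddExpNeg (2 * lam))
    (monotone_neg_div_exp_mul_add_one ha.le) (hasSum_logOneAddExpNeg ha)
    (integrableOn_logOneAddExpNeg ha) (tendsto_logOneAddExpNeg_natCast ha)
    (tendsto_neg_div_exp_mul_natCast_add_one ha)
  have hI : π ^ 2 / 12 / (2 * lam) = π ^ 2 / (24 * lam) := by field_simp; ring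
  have hf0 : logOneAddExpNeg (2 * lam) 0 = log 2 := by
    norm_num [logOneAddExpNeg, one_add_one_eq_two]
  rw [integral_logOneAddExpNeg ha, hI, hf0] at hlow hup
  simp only [mul_zero, exp_zero] at hup
  have hterm (n : ℕ) : -(2 * ((n : ℝ) + 1)) * lam = -(2 * lam * (n + 1)) := by ring
  simp_rw [hterm, abs_le]
  constructor <;> linarith
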